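/- arXiv:2410.11318 — 2 statements merged into one kernel-verified Lean document; each statement's English description precedes it below -/
import Mathlib

section
/- For every odd positive integer n, the sign of ∑_{d | n} (-1/d) · d^2 equals (-1)^{#{p prime : p | n, p ≡ 3 (mod 4), ord_p(n) odd}}, which is 1 if n ≡ 1 (mod 4) and -1 if n ≡ 3 (mod 4). -/
/-!
The map `d ↦ J(-1 | d) d²` is completely multiplicative, so its divisor sum is multiplicative,
and on a prime power `p ^ e` it is a geometric sum with ratio `J(-1 | p) p²`, of absolute value
at least 4. Such a sum has the sign of its last term, `J(-1 | p ^ e)`; hence the sign of the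
whole sum is `J(-1 | n) = χ₄ n`, which is read off from the factorization of `n` as well as
from `n mod 4`.
-/

open Finset ZMod

theorem Nat.Coprime.sum_divisors_mul_of_map_mul {R : Type*} [CommSemiring R] {f : ℕ → R}
    (hf : ∀ a b, f (a * b) = f a * f b) {m n : ℕ} (hmn : m.Coprime n) :
    ∑ d ∈ (m * n).divisors, f d = (∑ d ∈ m.divisors, f d) * ∑ d ∈ n.divisors, f d := by
  rw [hmn.divisors_mul, sum_map, sum_mul_sum, ← sum_product' (f := fun i j => f i * f j)]
  exact (sum_attach _ fun p : ℕ × ℕ => f (p.1 * p.2)).trans (sum_congr rfl fun p _ => hf p.1 p.2)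

theorem Int.sign_geom_sum {x : ℤ} (hx₀ : x ≠ 0) (hx : x ≠ -1) (e : ℕ) :
    (∑ i ∈ Finset.range (e + 1), x ^ i).sign = x.sign ^ e := by
  rcases hx₀.lt_or_gt with hneg | hpos
  · rw [Int.sign_eq_neg_one_of_neg hneg]
    rcases Nat.even_or_odd e with he | he
    · have hS : ¬ ∑ i ∈ Finset.range (e + 1), x ^ i < 0 := by
        rw [geom_sum_neg_iff e.succ_ne_zero]
        exact fun h => Nat.not_even_iff_odd.mpr he.add_one h.1
      rw [he.neg_one_pow, Int.sign_eq_one_iff_pos]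
      exact lt_of_le_of_ne (not_lt.mp hS) (geom_sum_ne_zero hx e.succ_ne_zero).symm
    · rw [he.neg_one_pow, Int.sign_eq_neg_one_iff_neg, geom_sum_neg_iff e.succ_ne_zero]
      exact ⟨he.add_one, by omega⟩
  · rw [Int.sign_eq_one_of_pos hpos, one_pow, Int.sign_eq_one_iff_pos]
    exact geom_sum_pos hpos.le e.succ_ne_zero

theorem jacobiSym_mul_sq_mul (a : ℤ) (b c : ℕ) :
    jacobiSym a (b * c) * ((b * c : ℕ) : ℤ) ^ 2
      = jacobiSym a b * (b : ℤ) ^ 2 * (jacobiSym a c * (c : ℤ) ^ 2) := by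
  rcases eq_or_ne b 0 with rfl | hb
  · simp
  rcases eq_or_ne c 0 with rfl | hc
  · simp
  rw [jacobiSym.mul_right' a hb hc]
  push_cast
  ring

theorem sum_divisors_prime_pow_jacobiSym_mul_sq (a : ℤ) {p : ℕ} (hp : p.Prime) (e : ℕ) :
    ∑ d ∈ (p ^ e).divisors, jacobiSym a d * (d : ℤ) ^ 2
      = ∑ i ∈ range (e + 1), (jacobiSym a p * (p : ℤ) ^ 2) ^ i := by
  rw [Nat.sum_divisors_prime_pow hp]
  refine sum_congr rfl fun i _ => ?_
  rw [jacobiSym.pow_right, mul_pow, Nat.cast_pow, ← pow_mul, ← pow_mul, mul_comm i]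

theorem sign_sum_divisors_prime_pow_jacobiSym_neg_one_mul_sq {p : ℕ} (hp : p.Prime) (e : ℕ) :
    (∑ d ∈ (p ^ e).divisors, jacobiSym (-1) d * (d : ℤ) ^ 2).sign = jacobiSym (-1) (p ^ e) := by
  have hJ : jacobiSym (-1) p = 1 ∨ jacobiSym (-1) p = -1 :=
    jacobiSym.eq_one_or_neg_one (by simp)
  have hp2 : (2 : ℤ) ≤ p := by exact_mod_cast hp.two_le
  have hsign : (jacobiSym (-1) p * (p : ℤ) ^ 2).sign = jacobiSym (-1) p := by
    rw [Int.sign_mul, Int.sign_eq_one_of_pos (pow_pos (by omega) 2), mul_one]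
    rcases hJ with h | h <;> rw [h] <;> rfl
  rw [sum_divisors_prime_pow_jacobiSym_mul_sq _ hp, Int.sign_geom_sum, hsign, jacobiSym.pow_right]
  · rcases hJ with h | h <;> rw [h] <;> positivity
  · rcases hJ with h | h <;> rw [h] <;> nlinarith

theorem sign_sum_divisors_jacobiSym_neg_one_mul_sq {n : ℕ} (hn : n ≠ 0) :
    (∑ d ∈ n.divisors, jacobiSym (-1) d * (d : ℤ) ^ 2).sign = jacobiSym (-1) n := by
  induction n using Nat.recOnPosPrimePosCoprime with
  | prime_pow p e hp _ => exact sign_sum_divisors_prime_pow_jacobiSym_neg_one_mul_sq hp e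
  | zero => exact absurd rfl hn
  | one => simp
  | coprime a b ha hb hab iha ihb =>
    rw [hab.sum_divisors_mul_of_map_mul (jacobiSym_mul_sq_mul (-1)), Int.sign_mul,
      iha (by omega), ihb (by omega), jacobiSym.mul_right' _ (by omega) (by omega)]

theorem ZMod.χ₄_nat_pow_of_odd {m : ℕ} (hm : Odd m) (e : ℕ) :
    χ₄ (m ^ e : ℕ) = if m % 4 = 3 ∧ Odd e then -1 else 1 := by
  have hm2 : m % 2 = 1 := Nat.odd_iff.mp hm
  rw [Nat.cast_pow, map_pow, χ₄_nat_eq_if_mod_four, if_neg (by omega)]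
  rcases Nat.even_or_odd e with he | he
  · simp [he.neg_one_pow, Nat.not_odd_iff_even.mpr he]
  · by_cases h : m % 4 = 1
    · simp [h]
    · simp [he, he.neg_one_pow, show m % 4 = 3 by omega]

theorem ZMod.χ₄_nat_eq_neg_one_pow_card {n : ℕ} (hn : Odd n) :
    χ₄ n = (-1) ^ ((n.primeFactors.filter
      (fun p => p % 4 = 3 ∧ Odd (n.factorization p))).card) := by
  conv_lhs => rw [← Nat.prod_factorization_pow_eq_self hn.pos.ne']
  rw [Nat.prod_factorization_eq_prod_primeFactors, Nat.cast_prod, map_prod,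
    prod_congr rfl fun p hp => χ₄_nat_pow_of_odd (hn.of_dvd_nat (Nat.dvd_of_mem_primeFactors hp)) _,
    prod_ite, prod_const, prod_const, one_pow, mul_one]

theorem stmt4_general (n : ℕ) (hodd : Odd n) :
    Int.sign (∑ d ∈ n.divisors, jacobiSym (-1) d * (d : ℤ) ^ 2)
        = (-1) ^ ((n.primeFactors.filter
            (fun p => p % 4 = 3 ∧ Odd (n.factorization p))).card) ∧
      Int.sign (∑ d ∈ n.divisors, jacobiSym (-1) d * (d : ℤ) ^ 2)
        = (if n % 4 = 1 then 1 else -1) := by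
  have hsign := sign_sum_divisors_jacobiSym_neg_one_mul_sq hodd.pos.ne'
  rw [jacobiSym.at_neg_one hodd] at hsign
  refine ⟨hsign.trans (χ₄_nat_eq_neg_one_pow_card hodd), hsign.trans ?_⟩
  rw [χ₄_nat_eq_if_mod_four, if_neg (by rw [Nat.odd_iff.mp hodd]; exact one_ne_zero)]

/-- For odd positive `n`, the sign of `∑_{d ∣ n} (-1/d) d^2` equals
`(-1)^{#{p ∣ n : p ≡ 3 (mod 4), ord_p(n) odd}}`, which is `1` if `n ≡ 1 (mod 4)` and
`-1` if `n ≡ 3 (mod 4)`. -/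
theorem stmt4 (n : ℕ) (hn : 0 < n) (hodd : Odd n) :
    Int.sign (∑ d ∈ n.divisors, jacobiSym (-1) d * (d : ℤ) ^ 2)
        = (-1) ^ ((n.primeFactors.filter
            (fun p => p % 4 = 3 ∧ Odd (n.factorization p))).card) ∧
      Int.sign (∑ d ∈ n.divisors, jacobiSym (-1) d * (d : ℤ) ^ 2)
        = (if n % 4 = 1 then 1 else -1) :=
  stmt4_general n hodd
end

section
/- Assume the identity ∏_{j≥1} (1-q^j)^9 / (1-q^{3j})^3 = 1 - 9 ∑_{n≥1} (∑_{d|n} (d/3) d^2) q^n as formal power series. Then for a ≥ 0 and m a positive integer with gcd(3,m) = 1, the sign of the coefficient of q^{3^a m} equals -(m/3). -/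
/-!
The divisor sum `σ(n) = ∑_{d ∣ n} (d/3) d²` is multiplicative with `σ(3^a) = 1`, so the
coefficient of `q^{3^a m}` is `-9 σ(m)`. For a prime `p ≠ 3`, `σ(p^k)` is the geometric sum
`∑_{i ≤ k} ((p/3) p²)^i`, whose sign is `(p/3)^k` because `p² > 1`; by multiplicativity the sign
of `σ(m)` is therefore `(m/3)`.
-/

open ArithmeticFunction Finset
open scoped ArithmeticFunction.zeta

lemma neg_one_pow_mul_geom_sum_pos {R : Type*} [CommRing R] [LinearOrder R]
    [IsStrictOrderedRing R] {y : R} (hy : y + 1 < 0) (k : ℕ) :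
    0 < (-1) ^ k * ∑ i ∈ range (k + 1), y ^ i := by
  rcases Nat.even_or_odd k with hk | hk
  · rw [hk.neg_one_pow, one_mul, geom_sum_pos_iff k.succ_ne_zero]
    exact Or.inl hk.add_one
  · rw [hk.neg_one_pow, neg_one_mul, neg_pos, geom_sum_neg_iff k.succ_ne_zero]
    exact ⟨hk.add_one, hy⟩

lemma ArithmeticFunction.IsMultiplicative.pos_of_coprime {R : Type*} [CommSemiring R]
    [PartialOrder R] [IsStrictOrderedRing R] {f : ArithmeticFunction R} (hf : f.IsMultiplicative)
    {q : ℕ} (hpow : ∀ p k, p.Prime → 0 < k → q.Coprime p → 0 < f (p ^ k)) {n : ℕ} (hn : n ≠ 0)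
    (hqn : q.Coprime n) : 0 < f n := by
  rw [hf.multiplicative_factorization f hn]
  refine prod_pos fun p hp => ?_
  have hpn : p ∣ n := Nat.dvd_of_mem_primeFactors hp
  have hp : p.Prime := Nat.prime_of_mem_primeFactors hp
  exact hpow p _ hp (hp.factorization_pos_of_dvd hn hpn) (hqn.coprime_dvd_right hpn)

lemma jacobiSym_three_eq_one_or_neg_one {m : ℕ} (hm : Nat.Coprime 3 m) :
    jacobiSym m 3 = 1 ∨ jacobiSym m 3 = -1 :=
  jacobiSym.eq_one_or_neg_one hm.symm

noncomputable def chiThree : ArithmeticFunction ℤ :=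
  ⟨fun n => jacobiSym n 3, by simpa using jacobiSym.zero_left (by norm_num)⟩

lemma chiThree_apply (n : ℕ) : chiThree n = jacobiSym n 3 := rfl

lemma isMultiplicative_chiThree : chiThree.IsMultiplicative :=
  ⟨jacobiSym.one_left 3, fun {m n} _ => by simp [chiThree_apply, jacobiSym.mul_left]⟩

noncomputable def twistedSigma : ArithmeticFunction ℤ := chiThree.pmul ↑(pow 2) * ζ

lemma twistedSigma_apply (n : ℕ) :
    twistedSigma n = ∑ d ∈ n.divisors, jacobiSym d 3 * (d : ℤ) ^ 2 := by
  rw [twistedSigma, coe_mul_zeta_apply]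
  simp [chiThree_apply, pow_apply]

lemma isMultiplicative_twistedSigma : twistedSigma.IsMultiplicative :=
  (isMultiplicative_chiThree.pmul isMultiplicative_pow.natCast).mul isMultiplicative_zeta.natCast

lemma twistedSigma_prime_pow {p : ℕ} (hp : p.Prime) (k : ℕ) :
    twistedSigma (p ^ k) = ∑ i ∈ range (k + 1), (jacobiSym p 3 * (p : ℤ) ^ 2) ^ i := by
  simp [twistedSigma_apply, Nat.sum_divisors_prime_pow hp, jacobiSym.pow_left, mul_pow,
    ← pow_mul, mul_comm]

lemma twistedSigma_three_pow (a : ℕ) : twistedSigma (3 ^ a) = 1 := by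
  have h33 : jacobiSym 3 3 = 0 := jacobiSym.eq_zero_iff_not_coprime.mpr (by decide)
  simp [twistedSigma_prime_pow Nat.prime_three, sum_range_succ', h33]

lemma jacobiSym_mul_twistedSigma_pos {n : ℕ} (hn : n ≠ 0) (h3n : Nat.Coprime 3 n) :
    0 < jacobiSym n 3 * twistedSigma n := by
  refine (isMultiplicative_chiThree.pmul isMultiplicative_twistedSigma).pos_of_coprime
    (fun p k hp _ h3p => ?_) hn h3n
  rw [pmul_apply, chiThree_apply, twistedSigma_prime_pow hp, Nat.cast_pow, jacobiSym.pow_left]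
  rcases jacobiSym_three_eq_one_or_neg_one h3p with h | h <;> rw [h]
  · simpa using geom_sum_pos (sq_nonneg (p : ℤ)) k.succ_ne_zero
  · exact neg_one_pow_mul_geom_sum_pos (by nlinarith [hp.two_le]) k

theorem stmt16_general (C : ℕ → ℤ)
    (hC : ∀ n, 1 ≤ n → C n = -9 * ∑ d ∈ n.divisors, jacobiSym d 3 * (d : ℤ) ^ 2)
    (a m : ℕ) (hm3 : Nat.gcd 3 m = 1) :
    Int.sign (C (3 ^ a * m)) = -jacobiSym m 3 := by
  have hm : m ≠ 0 := by rintro rfl; simp at hm3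
  have hCm : C (3 ^ a * m) = -9 * twistedSigma m := by
    rw [hC _ (Nat.pos_of_ne_zero (by positivity)), ← twistedSigma_apply,
      isMultiplicative_twistedSigma.map_mul_of_coprime (Nat.Coprime.pow_left a hm3),
      twistedSigma_three_pow, one_mul]
  have hpos := jacobiSym_mul_twistedSigma_pos hm hm3
  rw [hCm, Int.sign_mul]
  rcases jacobiSym_three_eq_one_or_neg_one hm3 with h | h <;> rw [h] at hpos ⊢
  · rw [Int.sign_eq_one_of_pos (a := twistedSigma m) (by linarith)]; rfl
  · rw [Int.sign_eq_neg_one_of_neg (a := twistedSigma m) (by linarith)]; rfl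

/-- Assuming the expansion `∏_{j≥1}(1-q^j)^9/(1-q^{3j})^3 = 1 - 9∑_{n≥1}(∑_{d∣n}(d/3)d²)qⁿ`,
for `a ≥ 0` and `m` coprime to `3` the sign of the coefficient of `q^{3^a m}` is
`-(m/3)`. -/
theorem stmt16 (C : ℕ → ℤ) (hC0 : C 0 = 1)
    (hC : ∀ n, 1 ≤ n → C n = -9 * ∑ d ∈ n.divisors, jacobiSym d 3 * (d : ℤ) ^ 2)
    (a m : ℕ) (hm : 0 < m) (hm3 : Nat.gcd 3 m = 1) :
    Int.sign (C (3 ^ a * m)) = -jacobiSym m 3 :=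
  stmt16_general C hC a m hm3
end
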